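/- arXiv:2205.09718 — 3 statements merged into one kernel-verified Lean document; each statement's English description precedes it below -/
import Mathlib

section
/- For a metric pair (X,A), the pseudometric space D_∞(X,A) with the bottleneck distance is complete if and only if the quotient metric space X/A is complete. -/
open scoped ENNReal
open Filter Metric Set

/-- The bottleneck (pre)distance between two `ℕ`-indexed representatives of persistence
diagrams on the metric pair `(X, A)`: the infimum, over countable multisets `α`, `β` of points
of `A` adjoined to `f` and `g` respectively and over bijections between the resulting
multisets, of the supremum displacement. -/
noncomputable def bdist {X : Type*} [MetricSpace X] (A : Set X) (f g : ℕ → X) : ℝ≥0∞ :=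
  ⨅ (α : ℕ → X) (_ : ∀ n, α n ∈ A) (β : ℕ → X) (_ : ∀ n, β n ∈ A)
    (e : (ℕ ⊕ ℕ) ≃ (ℕ ⊕ ℕ)), ⨆ n : ℕ ⊕ ℕ, edist (Sum.elim f α n) (Sum.elim g β (e n))

/-- Two representatives define the same persistence diagram on `(X, A)` iff their restrictions
away from `A` agree as multisets, i.e. there is a value-preserving bijection between the index
sets of points outside `A`. -/
def DiagEquiv {X : Type*} [MetricSpace X] (A : Set X) (f g : ℕ → X) : Prop :=
  ∃ e : {n : ℕ // f n ∉ A} ≃ {n : ℕ // g n ∉ A}, ∀ p, g (e p).1 = f p.1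

/-- A representative belongs to `D_∞(X, A)` iff it is at finite bottleneck distance from the
empty diagram (represented by any multiset of points of `A`). -/
def IsDiagram {X : Type*} [MetricSpace X] (A : Set X) (f : ℕ → X) : Prop :=
  ∃ g : ℕ → X, (∀ n, g n ∈ A) ∧ bdist A f g ≠ ⊤

/-- The quotient metric of `X/A`, read on representatives in `X`:
`d_{X/A}(x,y) = min (d(x,y)) (d(x,A) + d(y,A))`. -/
noncomputable def qdist {X : Type*} [MetricSpace X] (A : Set X) (x y : X) : ℝ :=
  min (dist x y) (Metric.infDist x A + Metric.infDist y A)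

/-!
`qbdist A a₀` is the bottleneck distance computed in `X/A`, with the point `A` represented by
`a₀ ∈ A`. It coincides with `bdist A`: a matching in `X/A` of cost `< r` lifts to a matching in `X`
by breaking every pair that is `r`-far in `X` and sending each of its two points to a point of `A`
at distance `< r`.

If `D_∞(X, A)` is complete, a Cauchy sequence `xₖ` in `X/A` gives the Cauchy sequence of one-point
diagrams `{xₖ}`. Its limit `τ` either lies in `closure A`, and then `xₖ → A`, or has a point
`τ m ∉ closure A`, which is eventually matched to `xₖ`, and then `xₖ → τ m`.

Conversely, let `σᵢ` be diagrams with `bdist (σᵢ, σᵢ₊₁) < 2⁻ⁱ`. Composing the matchings sends each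
point of `σ₀` along a Cauchy sequence in `X/A`, and the limits of these sequences form the limit
diagram.
-/

open Topology

section QuotientDistance

variable {X : Type*} [MetricSpace X] (A : Set X)

lemma qdist_comm (x y : X) : qdist A x y = qdist A y x := by
  rw [qdist, qdist, dist_comm, add_comm]

lemma qdist_nonneg (x y : X) : 0 ≤ qdist A x y :=
  le_min dist_nonneg (add_nonneg infDist_nonneg infDist_nonneg)

lemma qdist_self (x : X) : qdist A x x = 0 :=
  le_antisymm ((min_le_left _ _).trans_eq (dist_self x)) (qdist_nonneg A x x)

lemma qdist_le_dist (x y : X) : qdist A x y ≤ dist x y := min_le_left _ _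

lemma qdist_triangle (x y z : X) : qdist A x z ≤ qdist A x y + qdist A y z := by
  have hxy := infDist_le_infDist_add_dist (s := A) (x := x) (y := y)
  have hzy := infDist_le_infDist_add_dist (s := A) (x := z) (y := y)
  have hy := infDist_nonneg (s := A) (x := y)
  rcases min_cases (dist x y) (infDist x A + infDist y A) with ⟨h1, _⟩ | ⟨h1, _⟩ <;>
  rcases min_cases (dist y z) (infDist y A + infDist z A) with ⟨h2, _⟩ | ⟨h2, _⟩ <;>
  rw [qdist, qdist, qdist, h1, h2]
  · exact (min_le_left _ _).trans (dist_triangle x y z)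
  · exact (min_le_right _ _).trans (by linarith [dist_comm x y])
  · exact (min_le_right _ _).trans (by linarith [dist_comm z y])
  · exact (min_le_right _ _).trans (by linarith)

lemma infDist_le_infDist_add_qdist (x y : X) : infDist x A ≤ infDist y A + qdist A x y := by
  rcases min_cases (dist x y) (infDist x A + infDist y A) with ⟨h, _⟩ | ⟨h, _⟩ <;>
    rw [qdist, h]
  · exact infDist_le_infDist_add_dist
  · linarith [infDist_nonneg (s := A) (x := y)]

variable {A}

lemma qdist_of_mem_right {a : X} (ha : a ∈ A) (x : X) : qdist A x a = infDist x A := by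
  rw [qdist, infDist_zero_of_mem ha, add_zero]
  exact min_eq_right (infDist_le_dist_of_mem ha)

lemma qdist_of_mem_left {a : X} (ha : a ∈ A) (x : X) : qdist A a x = infDist x A := by
  rw [qdist_comm, qdist_of_mem_right ha]

lemma qdist_eq_zero_of_mem {a b : X} (ha : a ∈ A) (hb : b ∈ A) : qdist A a b = 0 := by
  rw [qdist_of_mem_right hb, infDist_zero_of_mem ha]

/-- A point of `X`, seen in the pseudometric space that `X/A` induces on `X`. -/
structure QuotientDist (A : Set X) where
  mk ::
  out : X

noncomputable instance : PseudoMetricSpace (QuotientDist A) where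
  dist x y := qdist A x.out y.out
  dist_self x := qdist_self A x.out
  dist_comm x y := qdist_comm A x.out y.out
  dist_triangle x y z := qdist_triangle A x.out y.out z.out

variable (A) in
lemma completeSpace_quotientDist_iff : CompleteSpace (QuotientDist A) ↔
    ∀ x : ℕ → X, (∀ ε : ℝ, 0 < ε → ∃ N, ∀ j k, N ≤ j → N ≤ k → qdist A (x j) (x k) < ε) →
      ∃ l : X, Tendsto (fun k => qdist A (x k) l) atTop (𝓝 0) := by
  constructor
  · intro _ x hcauchy
    obtain ⟨l, hl⟩ := cauchySeq_tendsto_of_complete (u := fun k => QuotientDist.mk (A := A) (x k))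
      (Metric.cauchySeq_iff.2 fun ε hε => (hcauchy ε hε).imp fun N hN j hj k hk => hN j k hj hk)
    exact ⟨l.out, tendsto_iff_dist_tendsto_zero.1 hl⟩
  · refine fun h => Metric.complete_of_cauchySeq_tendsto fun u hu => ?_
    obtain ⟨l, hl⟩ := h (fun k => (u k).out)
      fun ε hε => (Metric.cauchySeq_iff.1 hu ε hε).imp fun N hN j k hj hk => hN j hj k hk
    exact ⟨.mk l, tendsto_iff_dist_tendsto_zero.2 hl⟩

end QuotientDistance

section Padding

variable {X : Type*} {a₀ : X}

def pad (a₀ : X) (f : ℕ → X) : ℕ ⊕ ℕ → X := Sum.elim f fun _ => a₀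

@[simp] lemma pad_inl (f : ℕ → X) (k : ℕ) : pad a₀ f (.inl k) = f k := rfl

@[simp] lemma pad_inr (f : ℕ → X) (k : ℕ) : pad a₀ f (.inr k) = a₀ := rfl

def onePoint (a₀ x : X) : ℕ → X := Function.update (fun _ => a₀) 0 x

lemma onePoint_self (a₀ : X) : onePoint a₀ a₀ = fun _ => a₀ := Function.update_eq_self 0 _

lemma pad_onePoint_eq_or (x : X) (n : ℕ ⊕ ℕ) :
    pad a₀ (onePoint a₀ x) n = x ∨ pad a₀ (onePoint a₀ x) n = a₀ := by
  rcases n with (_ | k) | k <;> simp [onePoint]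

end Padding

section Matching

variable {X : Type*} [MetricSpace X] {A : Set X} {a₀ : X}

variable (A a₀) in
/-- The bottleneck distance in `X/A` between the images of `f` and `g`, the point `A` of `X/A`
being represented by `a₀`. -/
noncomputable def qbdist (f g : ℕ → X) : ℝ≥0∞ :=
  ⨅ e : (ℕ ⊕ ℕ) ≃ (ℕ ⊕ ℕ), ⨆ n, ENNReal.ofReal (qdist A (pad a₀ f n) (pad a₀ g (e n)))

lemma qbdist_le_ofReal (e : (ℕ ⊕ ℕ) ≃ (ℕ ⊕ ℕ)) {f g : ℕ → X} {r : ℝ}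
    (h : ∀ n, qdist A (pad a₀ f n) (pad a₀ g (e n)) ≤ r) : qbdist A a₀ f g ≤ ENNReal.ofReal r :=
  iInf_le_of_le e <| iSup_le fun n => ENNReal.ofReal_le_ofReal (h n)

lemma exists_qdist_lt_of_qbdist_lt {f g : ℕ → X} {r : ℝ}
    (h : qbdist A a₀ f g < ENNReal.ofReal r) :
    ∃ e : (ℕ ⊕ ℕ) ≃ (ℕ ⊕ ℕ), ∀ n, qdist A (pad a₀ f n) (pad a₀ g (e n)) < r := by
  obtain ⟨e, he⟩ := iInf_lt_iff.1 h
  exact ⟨e, fun n => (ENNReal.ofReal_lt_ofReal_iff'.1 ((le_iSup _ n).trans_lt he)).1⟩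

lemma qbdist_self (f : ℕ → X) : qbdist A a₀ f f = 0 := by
  have : qbdist A a₀ f f ≤ ENNReal.ofReal 0 :=
    qbdist_le_ofReal (Equiv.refl _) fun n => (qdist_self A _).le
  simpa using this

lemma qbdist_comm (f g : ℕ → X) : qbdist A a₀ f g = qbdist A a₀ g f := by
  suffices ∀ f g : ℕ → X, qbdist A a₀ g f ≤ qbdist A a₀ f g from le_antisymm (this g f) (this f g)
  intro f g
  refine le_iInf fun e => iInf_le_of_le e.symm ?_
  rw [← e.iSup_comp]
  simp [qdist_comm]

lemma qbdist_triangle (f g h : ℕ → X) :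
    qbdist A a₀ f h ≤ qbdist A a₀ f g + qbdist A a₀ g h := by
  refine ENNReal.le_iInf_add_iInf fun e₁ e₂ => iInf_le_of_le (e₁.trans e₂) <| iSup_le fun n => ?_
  calc ENNReal.ofReal (qdist A (pad a₀ f n) (pad a₀ h (e₂ (e₁ n))))
      ≤ ENNReal.ofReal (qdist A (pad a₀ f n) (pad a₀ g (e₁ n)))
        + ENNReal.ofReal (qdist A (pad a₀ g (e₁ n)) (pad a₀ h (e₂ (e₁ n)))) :=
        (ENNReal.ofReal_le_ofReal (qdist_triangle A _ _ _)).trans ENNReal.ofReal_add_le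
    _ ≤ _ := add_le_add
        (le_iSup (fun m => ENNReal.ofReal (qdist A (pad a₀ f m) (pad a₀ g (e₁ m)))) n)
        (le_iSup (fun m => ENNReal.ofReal (qdist A (pad a₀ g m) (pad a₀ h (e₂ m)))) (e₁ n))

lemma qbdist_le_iSup_qdist (f g : ℕ → X) :
    qbdist A a₀ f g ≤ ⨆ k, ENNReal.ofReal (qdist A (f k) (g k)) := by
  refine iInf_le_of_le (Equiv.refl _) <| iSup_le ?_
  rintro (k | k)
  · exact le_iSup (fun k => ENNReal.ofReal (qdist A (f k) (g k))) k
  · simp [qdist_self]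

lemma qbdist_pad_comp_eq_zero (f : ℕ → X) (ψ : ℕ ≃ ℕ ⊕ ℕ) :
    qbdist A a₀ f (pad a₀ f ∘ ψ) = 0 := by
  let μ : ℕ ⊕ ℕ ≃ ℕ := Denumerable.eqv (ℕ ⊕ ℕ)
  let φ : (ℕ ⊕ ℕ) ≃ (ℕ ⊕ ℕ) :=
    ((Equiv.sumCongr ψ (Equiv.refl ℕ)).trans (Equiv.sumAssoc ℕ ℕ ℕ)).trans
      (Equiv.sumCongr (Equiv.refl ℕ) μ)
  have hφ : ∀ n, pad a₀ f (φ n) = pad a₀ (pad a₀ f ∘ ψ) n := by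
    rintro (k | k)
    · rcases h : ψ k with k' | k' <;> simp [φ, h]
    · simp [φ]
  have : qbdist A a₀ f (pad a₀ f ∘ ψ) ≤ ENNReal.ofReal 0 :=
    qbdist_le_ofReal φ.symm fun n => by rw [← hφ, φ.apply_symm_apply, qdist_self]
  simpa using this

end Matching

def swapIf {ι : Type*} (P : ι → Prop) [DecidablePred P] : Equiv.Perm (ι ⊕ ι) :=
  Function.Involutive.toPerm (fun i => if P (Sum.elim id id i) then i.swap else i) <| by
    rintro (i | i) <;> by_cases h : P i <;> simp [h]

@[simp] lemma swapIf_inl {ι : Type*} (P : ι → Prop) [DecidablePred P] (i : ι) :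
    swapIf P (.inl i) = if P i then .inr i else .inl i := rfl

@[simp] lemma swapIf_inr {ι : Type*} (P : ι → Prop) [DecidablePred P] (i : ι) :
    swapIf P (.inr i) = if P i then .inl i else .inr i := rfl

section BottleneckDistance

variable {X : Type*} [MetricSpace X] {A : Set X} {a₀ : X}

lemma bdist_le_iSup_of_equiv {κ : Type*} (φ : κ ≃ ℕ ⊕ ℕ) {f g α β : ℕ → X}
    (hα : ∀ n, α n ∈ A) (hβ : ∀ n, β n ∈ A) (s : κ ≃ κ) :
    bdist A f g ≤ ⨆ i, edist (Sum.elim f α (φ i)) (Sum.elim g β (φ (s i))) := by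
  calc bdist A f g
      ≤ ⨆ n, edist (Sum.elim f α n) (Sum.elim g β ((φ.symm.trans (s.trans φ)) n)) :=
        iInf_le_of_le α <| iInf_le_of_le hα <| iInf_le_of_le β <| iInf_le_of_le hβ <|
          iInf_le _ _
    _ = _ := by rw [← φ.iSup_comp]; simp

lemma exists_perm_dist_lt_of_qdist_lt {ι : Type*} (ha₀ : a₀ ∈ A) {F G : ι → X} {r : ℝ}
    (h : ∀ n, qdist A (F n) (G n) < r) :
    ∃ (cF cG : ι → X) (s : Equiv.Perm (ι ⊕ ι)), (∀ n, cF n ∈ A) ∧ (∀ n, cG n ∈ A) ∧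
      ∀ i, dist (Sum.elim F cG i) (Sum.elim G cF (s i)) < r := by
  classical
  let P n := r ≤ dist (F n) (G n)
  have hnear : ∀ n, P n → ∃ a ∈ A, ∃ b ∈ A, dist (F n) a < r ∧ dist (G n) b < r := by
    intro n hn
    have hsum : infDist (F n) A + infDist (G n) A < r :=
      (min_lt_iff.1 (h n)).resolve_left (not_lt.2 hn)
    have := infDist_nonneg (x := F n) (s := A)
    have := infDist_nonneg (x := G n) (s := A)
    obtain ⟨a, haA, ha⟩ := (infDist_lt_iff ⟨a₀, ha₀⟩).1 (show infDist (F n) A < r by linarith)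
    obtain ⟨b, hbA, hb⟩ := (infDist_lt_iff ⟨a₀, ha₀⟩).1 (show infDist (G n) A < r by linarith)
    exact ⟨a, haA, b, hbA, ha, hb⟩
  have : Nonempty X := ⟨a₀⟩
  choose! aF haF aG haG hF hG using hnear
  refine ⟨fun n => if P n then aF n else a₀, fun n => if P n then aG n else a₀, swapIf P,
    fun n => ?_, fun n => ?_, ?_⟩
  · dsimp only
    split_ifs with hn
    exacts [haF n hn, ha₀]
  · dsimp only
    split_ifs with hn
    exacts [haG n hn, ha₀]
  · rintro (n | n) <;> by_cases hn : P n <;>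
      simp only [hn, swapIf_inl, swapIf_inr, if_true, if_false, Sum.elim_inl, Sum.elim_inr]
    · exact hF n hn
    · exact not_le.1 hn
    · exact dist_comm (G n) (aG n) ▸ hG n hn
    · simpa using (qdist_nonneg ..).trans_lt (h n)

lemma bdist_le_of_forall_qdist_lt (ha₀ : a₀ ∈ A) {f g : ℕ → X} {r : ℝ} (e : (ℕ ⊕ ℕ) ≃ (ℕ ⊕ ℕ))
    (h : ∀ n, qdist A (pad a₀ f n) (pad a₀ g (e n)) < r) : bdist A f g ≤ ENNReal.ofReal r := by
  obtain ⟨cF, cG, s, hcF, hcG, hcost⟩ :=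
    exists_perm_dist_lt_of_qdist_lt (G := pad a₀ g ∘ e) ha₀ h
  let μ : ℕ ⊕ (ℕ ⊕ ℕ) ≃ ℕ := Denumerable.eqv _
  let φ : (ℕ ⊕ ℕ) ⊕ (ℕ ⊕ ℕ) ≃ ℕ ⊕ ℕ :=
    (Equiv.sumAssoc ℕ ℕ (ℕ ⊕ ℕ)).trans (Equiv.sumCongr (Equiv.refl ℕ) μ)
  have hφ (u : ℕ → X) (c : ℕ ⊕ ℕ → X) (i) :
      Sum.elim u (Sum.elim (fun _ => a₀) c ∘ μ.symm) (φ i) = Sum.elim (pad a₀ u) c i := by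
    rcases i with (k | k) | k <;> simp [φ]
  have hmem {c : ℕ ⊕ ℕ → X} (hc : ∀ n, c n ∈ A) n : (Sum.elim (fun _ => a₀) c ∘ μ.symm) n ∈ A := by
    rw [Function.comp_apply]
    rcases μ.symm n with k | k
    exacts [ha₀, hc k]
  refine (bdist_le_iSup_of_equiv φ (hmem hcG) (hmem hcF)
    (s.trans (Equiv.sumCongr e (Equiv.refl _)))).trans (iSup_le fun i => ?_)
  rw [hφ, hφ, edist_dist]
  refine ENNReal.ofReal_le_ofReal (le_of_eq_of_le ?_ (hcost i).le)
  rw [Equiv.trans_apply]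
  rcases s i with k | k <;> rfl

lemma qdist_pad_sumElim_eq_zero (ha₀ : a₀ ∈ A) (f : ℕ → X) {α : ℕ → X} (hα : ∀ n, α n ∈ A)
    (n : ℕ ⊕ ℕ) : qdist A (pad a₀ f n) (Sum.elim f α n) = 0 := by
  rcases n with k | k
  · exact qdist_self A (f k)
  · exact qdist_eq_zero_of_mem ha₀ (hα k)

lemma qbdist_le_bdist (ha₀ : a₀ ∈ A) (f g : ℕ → X) : qbdist A a₀ f g ≤ bdist A f g := by
  refine le_iInf fun α => le_iInf fun hα => le_iInf fun β => le_iInf fun hβ => le_iInf fun e =>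
    iInf_le_of_le e <| iSup_mono fun n => ?_
  rw [edist_dist]
  refine ENNReal.ofReal_le_ofReal ?_
  have := qdist_triangle A (pad a₀ f n) (Sum.elim f α n) (pad a₀ g (e n))
  have := qdist_triangle A (Sum.elim f α n) (Sum.elim g β (e n)) (pad a₀ g (e n))
  have := qdist_pad_sumElim_eq_zero ha₀ f hα n
  have := qdist_pad_sumElim_eq_zero ha₀ g hβ (e n)
  have := qdist_le_dist A (Sum.elim f α n) (Sum.elim g β (e n))
  linarith [qdist_comm A (Sum.elim g β (e n)) (pad a₀ g (e n))]

lemma bdist_le_qbdist (ha₀ : a₀ ∈ A) (f g : ℕ → X) : bdist A f g ≤ qbdist A a₀ f g := by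
  refine le_iInf fun e => le_of_forall_gt_imp_ge_of_dense fun c hc => ?_
  rcases eq_or_ne c ⊤ with rfl | hc_top
  · exact le_top
  rw [← ENNReal.ofReal_toReal hc_top]
  exact bdist_le_of_forall_qdist_lt ha₀ e fun n =>
    (ENNReal.ofReal_lt_iff_lt_toReal (qdist_nonneg ..) hc_top).1 ((le_iSup _ n).trans_lt hc)

theorem bdist_eq_qbdist (ha₀ : a₀ ∈ A) (f g : ℕ → X) : bdist A f g = qbdist A a₀ f g :=
  (bdist_le_qbdist ha₀ f g).antisymm (qbdist_le_bdist ha₀ f g)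

end BottleneckDistance

section Diagrams

variable {X : Type*} [MetricSpace X] {A : Set X} {a₀ : X}

lemma IsDiagram.nonempty {f : ℕ → X} (h : IsDiagram A f) : A.Nonempty :=
  let ⟨g, hg, _⟩ := h
  ⟨g 0, hg 0⟩

lemma isDiagram_const (ha₀ : a₀ ∈ A) : IsDiagram A fun _ => a₀ :=
  ⟨fun _ => a₀, fun _ => ha₀, by rw [bdist_eq_qbdist ha₀, qbdist_self]; exact ENNReal.zero_ne_top⟩

lemma IsDiagram.of_qbdist_ne_top (ha₀ : a₀ ∈ A) {f g : ℕ → X} (hg : IsDiagram A g)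
    (h : qbdist A a₀ f g ≠ ⊤) : IsDiagram A f := by
  obtain ⟨g', hg'A, hfin⟩ := hg
  refine ⟨g', hg'A, ?_⟩
  rw [bdist_eq_qbdist ha₀] at hfin ⊢
  exact ne_top_of_le_ne_top (ENNReal.add_ne_top.2 ⟨h, hfin⟩) (qbdist_triangle f g g')

variable (A) in
/-- A point of `D_∞(X, A)`, given by a representative. -/
structure Diagram where
  toFun : ℕ → X
  isDiagram : IsDiagram A toFun

namespace Diagram

noncomputable instance : PseudoEMetricSpace (Diagram A) where
  edist f g := bdist A f.toFun g.toFun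
  edist_self f := by
    obtain ⟨a₀, ha₀⟩ := f.isDiagram.nonempty
    rw [bdist_eq_qbdist ha₀, qbdist_self]
  edist_comm f g := by
    obtain ⟨a₀, ha₀⟩ := f.isDiagram.nonempty
    rw [bdist_eq_qbdist ha₀, bdist_eq_qbdist ha₀, qbdist_comm]
  edist_triangle f g h := by
    obtain ⟨a₀, ha₀⟩ := f.isDiagram.nonempty
    simp only [bdist_eq_qbdist ha₀]
    exact qbdist_triangle _ _ _

lemma edist_def (f g : Diagram A) : edist f g = bdist A f.toFun g.toFun := rfl

end Diagram

lemma qbdist_onePoint_le (x y : X) :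
    qbdist A a₀ (onePoint a₀ x) (onePoint a₀ y) ≤ ENNReal.ofReal (qdist A x y) := by
  refine (qbdist_le_iSup_qdist _ _).trans <| iSup_le fun k => ENNReal.ofReal_le_ofReal ?_
  rcases k with _ | k
  · simp [onePoint]
  · simp [onePoint, qdist_self, qdist_nonneg]

lemma isDiagram_onePoint (ha₀ : a₀ ∈ A) (x : X) : IsDiagram A (onePoint a₀ x) :=
  (onePoint_self a₀ ▸ isDiagram_const ha₀).of_qbdist_ne_top ha₀
    (ne_top_of_le_ne_top ENNReal.ofReal_ne_top (qbdist_onePoint_le x a₀))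

def Diagram.ofPoint (ha₀ : a₀ ∈ A) (x : QuotientDist A) : Diagram A :=
  ⟨onePoint a₀ x.out, isDiagram_onePoint ha₀ x.out⟩

lemma Diagram.lipschitzWith_ofPoint (ha₀ : a₀ ∈ A) : LipschitzWith 1 (Diagram.ofPoint ha₀) :=
  LipschitzWith.of_edist_le fun x y => by
    rw [Diagram.edist_def, bdist_eq_qbdist ha₀, edist_dist]
    exact qbdist_onePoint_le _ _

lemma exists_qdist_lt_of_qbdist_onePoint_lt {x : X} {g : ℕ → X} {θ : ℝ}
    (h : qbdist A a₀ (onePoint a₀ x) g < ENNReal.ofReal θ) : ∃ n, qdist A x (pad a₀ g n) < θ := by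
  obtain ⟨e, he⟩ := exists_qdist_lt_of_qbdist_lt h
  exact ⟨e (.inl 0), by simpa [onePoint] using he (.inl 0)⟩

lemma qdist_lt_of_qbdist_onePoint_lt (ha₀ : a₀ ∈ A) {x : X} {g : ℕ → X} {θ : ℝ}
    (h : qbdist A a₀ (onePoint a₀ x) g < ENNReal.ofReal θ) {m : ℕ} (hm : θ ≤ infDist (g m) A) :
    qdist A x (g m) < θ := by
  obtain ⟨e, he⟩ := exists_qdist_lt_of_qbdist_lt h
  have hlt := he (e.symm (.inl m))
  rw [Equiv.apply_symm_apply, pad_inl] at hlt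
  rcases pad_onePoint_eq_or x (e.symm (.inl m)) with hx | ha
  · rwa [hx] at hlt
  · rw [ha, qdist_of_mem_left ha₀] at hlt
    exact absurd hm (not_le.2 hlt)

variable (A) in
lemma completeSpace_diagram_iff : CompleteSpace (Diagram A) ↔
    ∀ σ : ℕ → ℕ → X, (∀ k, IsDiagram A (σ k)) →
      (∀ ε : ℝ≥0∞, 0 < ε → ∃ N, ∀ j k, N ≤ j → N ≤ k → bdist A (σ j) (σ k) < ε) →
      ∃ τ : ℕ → X, IsDiagram A τ ∧ Tendsto (fun k => bdist A (σ k) τ) atTop (𝓝 0) := by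
  constructor
  · intro _ σ hσ hcauchy
    obtain ⟨τ, hτ⟩ := cauchySeq_tendsto_of_complete (u := fun k => (⟨σ k, hσ k⟩ : Diagram A))
      (EMetric.cauchySeq_iff.2 fun ε hε => (hcauchy ε hε).imp fun N hN j hj k hk => hN j k hj hk)
    exact ⟨τ.toFun, τ.isDiagram, tendsto_iff_edist_tendsto_0.1 hτ⟩
  · refine fun h => EMetric.complete_of_cauchySeq_tendsto fun u hu => ?_
    obtain ⟨τ, hτ, hlim⟩ := h (fun k => (u k).toFun) (fun k => (u k).isDiagram)
      fun ε hε => (EMetric.cauchySeq_iff.1 hu ε hε).imp fun N hN j k hj hk => hN j hj k hk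
    exact ⟨⟨τ, hτ⟩, tendsto_iff_edist_tendsto_0.2 hlim⟩

end Diagrams

section Completeness

variable {X : Type*} [MetricSpace X] {A : Set X} {a₀ : X}

theorem completeSpace_quotientDist (ha₀ : a₀ ∈ A) [CompleteSpace (Diagram A)] :
    CompleteSpace (QuotientDist A) := by
  refine Metric.complete_of_cauchySeq_tendsto fun u hu => ?_
  obtain ⟨τ, hτ⟩ := cauchySeq_tendsto_of_complete
    ((Diagram.lipschitzWith_ofPoint ha₀).uniformContinuous.comp_cauchySeq hu)
  have hclose : ∀ θ > 0, ∀ᶠ k in atTop,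
      qbdist A a₀ (onePoint a₀ (u k).out) τ.toFun < ENNReal.ofReal θ := fun θ hθ =>
    ((tendsto_iff_edist_tendsto_0.1 hτ).eventually (gt_mem_nhds (ENNReal.ofReal_pos.2 hθ))).mono
      fun k hk => by rwa [Diagram.edist_def, bdist_eq_qbdist ha₀] at hk
  by_cases hτA : ∃ m, 0 < infDist (τ.toFun m) A
  · obtain ⟨m, hm⟩ := hτA
    refine ⟨.mk (τ.toFun m), Metric.tendsto_nhds.2 fun ε hε => ?_⟩
    filter_upwards [hclose _ (lt_min hε hm)] with k hk
    exact (qdist_lt_of_qbdist_onePoint_lt ha₀ hk (min_le_right _ _)).trans_le (min_le_left _ _)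
  · simp only [not_exists, not_lt] at hτA
    refine ⟨.mk a₀, Metric.tendsto_nhds.2 fun ε hε => ?_⟩
    filter_upwards [hclose ε hε] with k hk
    obtain ⟨n, hn⟩ := exists_qdist_lt_of_qbdist_onePoint_lt hk
    have hτn : infDist (pad a₀ τ.toFun n) A = 0 := by
      rcases n with m | _
      · exact (hτA m).antisymm infDist_nonneg
      · exact infDist_zero_of_mem ha₀
    have := infDist_le_infDist_add_qdist A (u k).out (pad a₀ τ.toFun n)
    change qdist A (u k).out a₀ < ε
    rw [qdist_of_mem_right ha₀]
    linarith

lemma exists_qbdist_le_of_qdist_le_geometric [CompleteSpace (QuotientDist A)] {f : ℕ → ℕ → X}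
    (e : ℕ → (ℕ ⊕ ℕ) ≃ (ℕ ⊕ ℕ))
    (he : ∀ i n, qdist A (pad a₀ (f i) n) (pad a₀ (f (i + 1)) (e i n)) ≤ (1 / 2) ^ i) :
    ∃ τ : ℕ → X, ∀ i, qbdist A a₀ (f i) τ ≤ ENNReal.ofReal (2 * (1 / 2) ^ i) := by
  let E : ℕ → (ℕ ⊕ ℕ) ≃ (ℕ ⊕ ℕ) := fun i => Nat.rec (Equiv.refl _) (fun i E => E.trans (e i)) i
  let track (m : ℕ ⊕ ℕ) (i : ℕ) : QuotientDist A := .mk (pad a₀ (f i) (E i m))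
  have hstep m i : dist (track m i) (track m (i + 1)) ≤ 1 * (1 / 2) ^ i := by
    rw [one_mul]
    exact he i (E i m)
  choose l hl using fun m => cauchySeq_tendsto_of_complete
    (cauchySeq_of_le_geometric (1 / 2) 1 (by norm_num) (hstep m))
  have hbound m i : qdist A (pad a₀ (f i) (E i m)) (l m).out ≤ 2 * (1 / 2) ^ i := by
    calc qdist A (pad a₀ (f i) (E i m)) (l m).out = dist (track m i) (l m) := rfl
      _ ≤ 1 * (1 / 2) ^ i / (1 - 1 / 2) :=
        dist_le_of_le_geometric_of_tendsto (1 / 2) 1 (by norm_num) (hstep m) (hl m) i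
      _ = 2 * (1 / 2) ^ i := by ring
  let ν : ℕ ≃ ℕ ⊕ ℕ := (Denumerable.eqv (ℕ ⊕ ℕ)).symm
  refine ⟨fun k => (l (ν k)).out, fun i => ?_⟩
  -- `pad a₀ (f i) ∘ ν.trans (E i)` lists the points of `f i` in the order of their tracks.
  calc qbdist A a₀ (f i) (fun k => (l (ν k)).out)
      ≤ qbdist A a₀ (f i) (pad a₀ (f i) ∘ ν.trans (E i))
        + qbdist A a₀ (pad a₀ (f i) ∘ ν.trans (E i)) (fun k => (l (ν k)).out) :=
        qbdist_triangle _ _ _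
    _ ≤ 0 + ENNReal.ofReal (2 * (1 / 2) ^ i) := by
        gcongr
        · exact (qbdist_pad_comp_eq_zero _ _).le
        · exact (qbdist_le_iSup_qdist _ _).trans
            (iSup_le fun k => ENNReal.ofReal_le_ofReal (hbound (ν k) i))
    _ = _ := zero_add _

theorem completeSpace_diagram (ha₀ : a₀ ∈ A) [CompleteSpace (QuotientDist A)] :
    CompleteSpace (Diagram A) := by
  refine EMetric.complete_of_convergent_controlled_sequences
    (fun N => ENNReal.ofReal ((1 / 2) ^ N)) (fun N => by simp) fun u hu => ?_
  have hmatch i : ∃ e : (ℕ ⊕ ℕ) ≃ (ℕ ⊕ ℕ),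
      ∀ n, qdist A (pad a₀ (u i).toFun n) (pad a₀ (u (i + 1)).toFun (e n)) ≤ (1 / 2) ^ i := by
    have := hu i i (i + 1) le_rfl i.le_succ
    rw [Diagram.edist_def, bdist_eq_qbdist ha₀] at this
    obtain ⟨e, he⟩ := exists_qdist_lt_of_qbdist_lt this
    exact ⟨e, fun n => (he n).le⟩
  choose e he using hmatch
  obtain ⟨τ, hτ⟩ := exists_qbdist_le_of_qdist_le_geometric e he
  have hτd : IsDiagram A τ := (u 0).isDiagram.of_qbdist_ne_top ha₀ <| by
    rw [qbdist_comm]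
    exact ne_top_of_le_ne_top ENNReal.ofReal_ne_top (hτ 0)
  refine ⟨⟨τ, hτd⟩, tendsto_iff_edist_tendsto_0.2 ?_⟩
  have hlim : Tendsto (fun i => ENNReal.ofReal (2 * (1 / 2) ^ i)) atTop (𝓝 0) := by
    simpa using ENNReal.tendsto_ofReal
      ((tendsto_pow_atTop_nhds_zero_of_lt_one (r := (1 / 2 : ℝ)) (by norm_num)
        (by norm_num)).const_mul 2)
  refine tendsto_of_tendsto_of_tendsto_of_le_of_le tendsto_const_nhds hlim (fun _ => zero_le)
    fun i => ?_
  rw [Diagram.edist_def, bdist_eq_qbdist ha₀]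
  exact hτ i

end Completeness

theorem stmt_7_general {X : Type*} [MetricSpace X] (A : Set X) (hA : A.Nonempty) :
    (∀ σ : ℕ → ℕ → X, (∀ k, IsDiagram A (σ k)) →
        (∀ ε : ℝ≥0∞, 0 < ε → ∃ N, ∀ j k, N ≤ j → N ≤ k → bdist A (σ j) (σ k) < ε) →
        ∃ τ : ℕ → X, IsDiagram A τ ∧
          Tendsto (fun k => bdist A (σ k) τ) atTop (nhds 0))
    ↔
    (∀ x : ℕ → X,
        (∀ ε : ℝ, 0 < ε → ∃ N, ∀ j k, N ≤ j → N ≤ k → qdist A (x j) (x k) < ε) →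
        ∃ l : X, Tendsto (fun k => qdist A (x k) l) atTop (nhds 0)) := by
  obtain ⟨a₀, ha₀⟩ := hA
  rw [← completeSpace_diagram_iff, ← completeSpace_quotientDist_iff]
  exact ⟨fun _ => completeSpace_quotientDist ha₀, fun _ => completeSpace_diagram ha₀⟩

/-- `D_∞(X, A)` with the bottleneck distance is complete if and only if the quotient metric
space `X/A` is complete.  Both spaces are described via representatives: Cauchy sequences of
diagrams converge to a diagram iff every `qdist`-Cauchy sequence in `X` converges, in the
quotient metric, to (the class of) a point of `X`. -/
theorem stmt_7 {X : Type*} [MetricSpace X] (A : Set X) (hA : A.Nonempty)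
    (hAcl : IsClosed A) :
    (∀ σ : ℕ → ℕ → X, (∀ k, IsDiagram A (σ k)) →
        (∀ ε : ℝ≥0∞, 0 < ε → ∃ N, ∀ j k, N ≤ j → N ≤ k → bdist A (σ j) (σ k) < ε) →
        ∃ τ : ℕ → X, IsDiagram A τ ∧
          Tendsto (fun k => bdist A (σ k) τ) atTop (nhds 0))
    ↔
    (∀ x : ℕ → X,
        (∀ ε : ℝ, 0 < ε → ∃ N, ∀ j k, N ≤ j → N ≤ k → qdist A (x j) (x k) < ε) →
        ∃ l : X, Tendsto (fun k => qdist A (x k) l) atTop (nhds 0)) :=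
  stmt_7_general A hA
end

section
/- Let (X,A) be a metric pair such that for all D > δ > 0 the set B_D(A) \ B_δ(A) is totally bounded, where B_r(A) is the open r-neighborhood of A in X. Then the pseudometric space D_∞(X,A) with the bottleneck distance is separable. -/
open scoped ENNReal
open Filter Metric Set

/-!
Points of a diagram at distance `< q` from `A` are matched to `A` at cost `< q`. The other points
lie in `{q ≤ d(x, A) < D}` for a rational `D`, since a diagram is at finite distance from the
empty one; this set is totally bounded, so each of them can be moved by less than `q` onto one of
finitely many net points. The diagram obtained is determined by `q`, `D` and the multiplicities
(in `ℕ∞`) of the net points, which range over a countable set.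
-/

theorem Set.nonempty_equiv_of_encard_eq {α : Type*} [Countable α] {s t : Set α}
    (h : s.encard = t.encard) : Nonempty (s ≃ t) :=
  Cardinal.eq.1 <| (Cardinal.toENat_eq_iff_of_le_aleph0 Cardinal.mk_le_aleph0
    Cardinal.mk_le_aleph0).1 h

theorem encard_setOf_natCast_lt (c : ℕ∞) : {j : ℕ | (j : ℕ∞) < c}.encard = c := by
  induction c using ENat.recTopCoe with
  | top => simp
  | coe k => simpa [Iio_def] using Set.encard_coe_eq_coe_finsetCard (Finset.range k)

theorem exists_sumNatEquiv_inl_eq_inr (α β : Type*) [Countable α] [Countable β] :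
    ∃ ψ : α ⊕ ℕ ≃ β ⊕ ℕ, ∀ x, ∃ j, ψ (.inl x) = .inr j := by
  obtain ⟨eα⟩ := nonempty_equiv_of_countable (α := α ⊕ ℕ) (β := ℕ)
  obtain ⟨eβ⟩ := nonempty_equiv_of_countable (α := β ⊕ ℕ) (β := ℕ)
  -- `α ⊕ ℕ ≃ α ⊕ (β ⊕ ℕ) ≃ β ⊕ (α ⊕ ℕ) ≃ β ⊕ ℕ`
  refine ⟨(Equiv.sumCongr (Equiv.refl α) eβ.symm).trans <| (Equiv.sumAssoc α β ℕ).symm.trans <|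
    (Equiv.sumCongr (Equiv.sumComm α β) (Equiv.refl ℕ)).trans <| (Equiv.sumAssoc β α ℕ).trans <|
    Equiv.sumCongr (Equiv.refl β) eα, fun x => ⟨eα (.inl x), rfl⟩⟩

theorem Equiv.exists_sum_extend {L R : Set ℕ} (φ : L ≃ R) :
    ∃ e : ℕ ⊕ ℕ ≃ ℕ ⊕ ℕ, (∀ n : L, e (.inl n) = .inl (φ n)) ∧
      ∀ n ∉ L, ∃ j, e (.inl n) = .inr j := by
  classical
  let split (S : Set ℕ) : ℕ ⊕ ℕ ≃ S ⊕ ((Sᶜ : Set ℕ) ⊕ ℕ) :=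
    (Equiv.sumCongr (Equiv.Set.sumCompl S).symm (Equiv.refl ℕ)).trans (Equiv.sumAssoc _ _ _)
  obtain ⟨ψ, hψ⟩ := exists_sumNatEquiv_inl_eq_inr (Lᶜ : Set ℕ) (Rᶜ : Set ℕ)
  refine ⟨(split L).trans <| (Equiv.sumCongr φ ψ).trans (split R).symm, fun n => ?_, fun n hn => ?_⟩
  · simp [split, Equiv.Set.sumCompl_symm_apply]
  · obtain ⟨j, hj⟩ := hψ ⟨n, hn⟩
    refine ⟨j, ?_⟩
    simp [split, Equiv.Set.sumCompl_symm_apply_of_notMem hn, hj]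

theorem TotallyBounded.exists_nat_cover {Y : Type*} [PseudoMetricSpace Y] [Nonempty Y]
    {s : Set Y} (hs : TotallyBounded s) {ε : ℝ} (hε : 0 < ε) :
    ∃ N : ℕ, ∃ y : ℕ → Y, ∀ x ∈ s, ∃ i < N, dist x (y i) < ε := by
  obtain ⟨t, ht, hst⟩ := Metric.totallyBounded_iff.1 hs ε hε
  set l := ht.toFinset.toList
  refine ⟨l.length, fun i => l.getD i (Classical.arbitrary Y), fun x hx => ?_⟩
  obtain ⟨z, hz, hxz⟩ := mem_iUnion₂.1 (hst hx)
  obtain ⟨i, hi, rfl⟩ := List.mem_iff_getElem.1 (show z ∈ l by simpa [l] using hz)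
  exact ⟨i, hi, by dsimp only; rw [List.getD_eq_getElem _ _ hi]; exact mem_ball.1 hxz⟩

/-- The sequence made of `m i` copies of `y i` for each `i` (infinitely many if `m i = ⊤`), the
`j`-th copy of `y i` sitting at index `Nat.pair i j`, padded with `a` at all other indices. -/
def blockSeq {Y : Type*} (a : Y) (y : ℕ → Y) (m : ℕ → ℕ∞) (n : ℕ) : Y :=
  if (n.unpair.2 : ℕ∞) < m n.unpair.1 then y n.unpair.1 else a

def blockIndices (m : ℕ → ℕ∞) : Set ℕ := {n | (n.unpair.2 : ℕ∞) < m n.unpair.1}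

section BlockSeq

variable {Y : Type*} (a : Y) (y : ℕ → Y) {m : ℕ → ℕ∞} {n : ℕ}

theorem blockSeq_of_mem (h : n ∈ blockIndices m) : blockSeq a y m n = y n.unpair.1 := if_pos h

theorem blockSeq_of_notMem (h : n ∉ blockIndices m) : blockSeq a y m n = a := if_neg h

theorem blockSeq_mem_insert_image (m : ℕ → ℕ∞) (n : ℕ) :
    blockSeq a y m n ∈ insert a (y '' Function.support m) := by
  by_cases h : n ∈ blockIndices m
  · exact mem_insert_of_mem _ ⟨_, ne_bot_of_gt h, (blockSeq_of_mem a y h).symm⟩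
  · exact (blockSeq_of_notMem a y h).symm ▸ mem_insert a _

theorem exists_equiv_blockIndices (L : Set ℕ) (idx : ℕ → ℕ) :
    ∃ φ : L ≃ blockIndices (fun i => {n | n ∈ L ∧ idx n = i}.encard),
      ∀ n : L, (φ n : ℕ).unpair.1 = idx n := by
  set M : ℕ → ℕ∞ := fun i => {n | n ∈ L ∧ idx n = i}.encard
  have hfiber (i : ℕ) :
      Nonempty ({n : L // idx n = i} ≃ {n : blockIndices M // (n : ℕ).unpair.1 = i}) := by
    have hR : {n | n ∈ blockIndices M ∧ n.unpair.1 = i} = Nat.pair i '' {j | (j : ℕ∞) < M i} := by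
      ext n
      constructor
      · rintro ⟨hn, rfl⟩
        exact ⟨n.unpair.2, hn, Nat.pair_unpair n⟩
      · rintro ⟨j, hj, rfl⟩
        simpa [blockIndices] using hj
    have hinj : Function.Injective (Nat.pair i) := fun _ _ h => (Nat.pair_eq_pair.1 h).2
    obtain ⟨e⟩ := Set.nonempty_equiv_of_encard_eq (s := {n | n ∈ L ∧ idx n = i})
      (t := {n | n ∈ blockIndices M ∧ n.unpair.1 = i})
      (by rw [hR, hinj.encard_image, encard_setOf_natCast_lt])
    exact ⟨(Equiv.subtypeSubtypeEquivSubtypeInter _ _).trans <|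
      e.trans (Equiv.subtypeSubtypeEquivSubtypeInter _ _).symm⟩
  exact ⟨_, Equiv.ofFiberEquiv_map (f := fun n : L => idx n)
    (g := fun n : blockIndices M => (n : ℕ).unpair.1) fun i => (hfiber i).some⟩

end BlockSeq

section Bottleneck

variable {X : Type*} [MetricSpace X] {A : Set X} {f g : ℕ → X} {r : ℝ≥0∞}

theorem exists_forall_mem_and_edist_le {ι : Type*} {a : X} (ha : a ∈ A) {P : ι → Prop}
    {h : ι → X} (hP : ∀ n, ¬ P n → ∃ b ∈ A, edist (h n) b ≤ r) :
    ∃ p : ι → X, (∀ n, p n ∈ A) ∧ ∀ n, ¬ P n → edist (h n) (p n) ≤ r := by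
  have (n : ι) : ∃ b ∈ A, ¬ P n → edist (h n) b ≤ r := by
    by_cases hn : P n
    · exact ⟨a, ha, absurd hn⟩
    · obtain ⟨b, hb, hnb⟩ := hP n hn
      exact ⟨b, hb, fun _ => hnb⟩
  choose p hpA hp using this
  exact ⟨p, hpA, hp⟩

theorem exists_mem_edist_le_of_infDist_lt {x : X} {ρ : ℝ} (hA : A.Nonempty)
    (h : infDist x A < ρ) : ∃ b ∈ A, edist x b ≤ ENNReal.ofReal ρ := by
  obtain ⟨b, hb, hxb⟩ := (infDist_lt_iff hA).1 h
  exact ⟨b, hb, by rw [edist_dist]; exact ENNReal.ofReal_le_ofReal hxb.le⟩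

theorem bdist_le {α β : ℕ → X} (hα : ∀ n, α n ∈ A) (hβ : ∀ n, β n ∈ A) (e : ℕ ⊕ ℕ ≃ ℕ ⊕ ℕ)
    (h : ∀ x, edist (Sum.elim f α x) (Sum.elim g β (e x)) ≤ r) : bdist A f g ≤ r :=
  iInf₂_le_of_le α hα <| iInf₂_le_of_le β hβ <| iInf_le_of_le e <| iSup_le h

theorem bdist_le_of_partialMatching {a : X} (ha : a ∈ A) {L R : Set ℕ} (φ : L ≃ R)
    (hφ : ∀ n : L, edist (f n) (g (φ n)) ≤ r) (hf : ∀ n ∉ L, ∃ b ∈ A, edist (f n) b ≤ r)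
    (hg : ∀ n ∉ R, ∃ b ∈ A, edist (g n) b ≤ r) : bdist A f g ≤ r := by
  obtain ⟨e, heL, heLc⟩ := φ.exists_sum_extend
  obtain ⟨pf, hpfA, hpf⟩ := exists_forall_mem_and_edist_le ha hf
  obtain ⟨pg, hpgA, hpg⟩ := exists_forall_mem_and_edist_le ha hg
  have hL (n m : ℕ) (h : e (.inl n) = .inl m) : ∃ hn : n ∈ L, (φ ⟨n, hn⟩ : ℕ) = m := by
    by_cases hn : n ∈ L
    · exact ⟨hn, Sum.inl_injective ((heL ⟨n, hn⟩).symm.trans h)⟩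
    · obtain ⟨j, hj⟩ := heLc n hn
      simp [hj] at h
  -- a point sent by `e` into the padding is matched with its nearby point of `A`
  refine bdist_le (α := fun j => Sum.elim pg (fun _ => a) (e (.inr j)))
    (β := fun j => Sum.elim pf (fun _ => a) (e.symm (.inr j))) ?_ ?_ e ?_
  · intro j; cases e (.inr j) <;> simp [hpgA, ha]
  · intro j; cases e.symm (.inr j) <;> simp [hpfA, ha]
  rintro (n | j) <;> rcases hx : e _ with m | k <;> simp only [Sum.elim_inl, Sum.elim_inr, hx]
  · obtain ⟨hn, rfl⟩ := hL n m hx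
    exact hφ ⟨n, hn⟩
  · have hn : n ∉ L := fun hn => by simp [heL ⟨n, hn⟩] at hx
    simpa [e.symm_apply_eq.2 hx.symm] using hpf n hn
  · have hm : m ∉ R := fun hm => by
      simpa [← hx] using heL (φ.symm ⟨m, hm⟩)
    simpa [edist_comm] using hpg m hm
  · simp [e.symm_apply_eq.2 hx.symm]

theorem IsDiagram.bddAbove_infDist (hf : IsDiagram A f) :
    BddAbove (range fun n => infDist (f n) A) := by
  obtain ⟨g, hgA, hfg⟩ := hf
  simp only [bdist, ne_eq, iInf_eq_top, not_forall] at hfg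
  obtain ⟨α, -, β, hβ, e, hfin⟩ := hfg
  refine ⟨(⨆ x, edist (Sum.elim f α x) (Sum.elim g β (e x))).toReal, ?_⟩
  rintro _ ⟨n, rfl⟩
  have hmem : Sum.elim g β (e (.inl n)) ∈ A := by cases e (.inl n) <;> simp [hgA, hβ]
  calc infDist (f n) A ≤ dist (f n) (Sum.elim g β (e (.inl n))) := infDist_le_dist_of_mem hmem
    _ ≤ _ := by
      rw [dist_edist]
      exact ENNReal.toReal_mono hfin <| le_iSup (fun x => edist (Sum.elim f α x) _) (.inl n)

theorem isDiagram_iff_bddAbove (hA : A.Nonempty) :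
    IsDiagram A f ↔ BddAbove (range fun n => infDist (f n) A) := by
  refine ⟨IsDiagram.bddAbove_infDist, fun ⟨C, hC⟩ => ?_⟩
  obtain ⟨a, ha⟩ := hA
  refine ⟨fun _ => a, fun _ => ha, ne_top_of_le_ne_top ENNReal.ofReal_ne_top <|
    bdist_le_of_partialMatching (r := ENNReal.ofReal (C + 1)) ha (Equiv.refl (∅ : Set ℕ))
      (fun n => n.2.elim) (fun n _ => ?_) (fun _ _ => ⟨a, ha, by simp⟩)⟩
  exact exists_mem_edist_le_of_infDist_lt ⟨a, ha⟩ ((hC ⟨n, rfl⟩).trans_lt (lt_add_one C))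

theorem bdist_blockSeq_le {a : X} (ha : a ∈ A) (y : ℕ → X) {L : Set ℕ} {idx : ℕ → ℕ}
    (hL : ∀ n ∈ L, edist (f n) (y (idx n)) ≤ r) (hLc : ∀ n ∉ L, ∃ b ∈ A, edist (f n) b ≤ r) :
    bdist A f (blockSeq a y fun i => {n | n ∈ L ∧ idx n = i}.encard) ≤ r := by
  obtain ⟨φ, hφ⟩ := exists_equiv_blockIndices L idx
  refine bdist_le_of_partialMatching ha φ (fun n => ?_) hLc (fun n hn => ⟨a, ha, ?_⟩)
  · rw [blockSeq_of_mem a y (φ n).2, hφ]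
    exact hL n n.2
  · rw [blockSeq_of_notMem a y hn, edist_self]
    exact zero_le

theorem exists_bdist_blockSeq_le {a : X} (ha : a ∈ A) {y : ℕ → X} {N : ℕ} {δ : ℝ}
    (hcover : ∀ n, δ ≤ infDist (f n) A → ∃ i < N, dist (f n) (y i) < δ) :
    ∃ m : ℕ →₀ ℕ∞, bdist A f (blockSeq a y m) ≤ ENNReal.ofReal δ := by
  choose! idx hidxN hidx using hcover
  set L := {n | δ ≤ infDist (f n) A}
  have hfin : (Function.support fun i => {n | n ∈ L ∧ idx n = i}.encard).Finite :=
    (Set.finite_Iio N).subset fun i hi => by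
      obtain ⟨n, hnL, rfl⟩ := Set.nonempty_of_encard_ne_zero hi
      exact hidxN n hnL
  refine ⟨Finsupp.ofSupportFinite _ hfin, ?_⟩
  rw [Finsupp.ofSupportFinite_coe]
  refine bdist_blockSeq_le ha y (fun n hn => ?_) fun n hn =>
    exists_mem_edist_le_of_infDist_lt ⟨a, ha⟩ (not_le.1 hn)
  rw [edist_dist]
  exact ENNReal.ofReal_le_ofReal (hidx n hn).le

theorem isDiagram_blockSeq {a : X} (ha : a ∈ A) (y : ℕ → X) (m : ℕ →₀ ℕ∞) :
    IsDiagram A (blockSeq a y m) := by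
  refine (isDiagram_iff_bddAbove ⟨a, ha⟩).2 ?_
  have hfin : (insert a (y '' Function.support m)).Finite :=
    (m.hasFiniteSupport.image y).insert a
  refine (hfin.image fun x => infDist x A).bddAbove.mono ?_
  rintro _ ⟨n, rfl⟩
  exact mem_image_of_mem _ (blockSeq_mem_insert_image a y m n)

end Bottleneck

theorem stmt_9_general {X : Type*} [MetricSpace X] (A : Set X) (hA : A.Nonempty)
    (htb : ∀ D δ : ℝ, 0 < δ → δ < D →
      TotallyBounded {x : X | δ ≤ Metric.infDist x A ∧ Metric.infDist x A < D}) :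
    ∃ S : Set (ℕ → X), S.Countable ∧ (∀ f ∈ S, IsDiagram A f) ∧
      ∀ f : ℕ → X, IsDiagram A f → ∀ ε : ℝ≥0∞, 0 < ε → ∃ g ∈ S, bdist A f g < ε := by
  obtain ⟨a, ha⟩ := hA
  have : Nonempty X := ⟨a⟩
  have hnet (q D : ℚ) (hq : 0 < q) (hqD : q < D) :=
    (htb D q (mod_cast hq) (mod_cast hqD)).exists_nat_cover (ε := q) (mod_cast hq)
  choose! N y hy using hnet
  refine ⟨range fun p : ℚ × ℚ × (ℕ →₀ ℕ∞) => blockSeq a (y p.1 p.2.1) p.2.2, countable_range _,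
    ?_, fun f hf ε hε => ?_⟩
  · rintro _ ⟨p, rfl⟩
    exact isDiagram_blockSeq ha _ _
  obtain ⟨C, hC⟩ := (isDiagram_iff_bddAbove ⟨a, ha⟩).1 hf
  obtain ⟨q, -, hq, hqε⟩ := ENNReal.lt_iff_exists_rat_btwn.1 hε
  have hq : (0 : ℝ) < q := by simpa using hq
  obtain ⟨D, hD⟩ := exists_rat_gt (max C q)
  have hqD : q < D := by exact_mod_cast (le_max_right C (q : ℝ)).trans_lt hD
  obtain ⟨m, hm⟩ := exists_bdist_blockSeq_le ha (δ := q) fun n hn =>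
    hy q D (mod_cast hq) hqD (f n) ⟨hn, (hC ⟨n, rfl⟩).trans_lt ((le_max_left _ _).trans_lt hD)⟩
  exact ⟨_, ⟨(q, D, m), rfl⟩, hm.trans_lt hqε⟩

/-- If for all `D > δ > 0` the set `B_D(A) \ B_δ(A)` is totally bounded, then
`D_∞(X, A)` is separable: it contains a countable dense subset. -/
theorem stmt_9 {X : Type*} [MetricSpace X] (A : Set X) (hA : A.Nonempty)
    (hAcl : IsClosed A)
    (htb : ∀ D δ : ℝ, 0 < δ → δ < D →
      TotallyBounded {x : X | δ ≤ Metric.infDist x A ∧ Metric.infDist x A < D}) :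
    ∃ S : Set (ℕ → X), S.Countable ∧ (∀ f ∈ S, IsDiagram A f) ∧
      ∀ f : ℕ → X, IsDiagram A f → ∀ ε : ℝ≥0∞, 0 < ε → ∃ g ∈ S, bdist A f g < ε :=
  stmt_9_general A hA htb
end

section
/- Let (X,A) be a metric pair such that for some D > δ > 0 the set B_D(A) \ B_δ(A) is not totally bounded. Then the pseudometric space D_∞(X,A) with the bottleneck distance is not separable. -/
/-!
A set that is not totally bounded contains an infinite `ε`-separated sequence `(xₙ)`; here the
`xₙ` lie in the annulus `B_D(A) \ B_δ(A)`. For every `T ⊆ ℕ` the diagram `{xₙ | n ∈ T}` lies in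
`D_∞(X, A)`, since each of its points is within `D` of `A`. If `i ∈ T \ T'`, then a diagram `g`
that is `r`-close to both `{xₙ | n ∈ T}` and `{xₙ | n ∈ T'}`, with `2r = min ε δ`, would have to
match `xᵢ` to a point of `g`, and that point to either `A` or some `xₙ` with `n ≠ i`; both are at
distance `≥ 2r` from `xᵢ`. So these `2^ℵ₀` diagrams are pairwise `r`-separated, which no
countable dense set can accommodate.
-/

open scoped ENNReal
open Filter Metric Set

instance Set.uncountable_nat : Uncountable (Set ℕ) :=
  ⟨fun h => let ⟨f, hf⟩ := h.exists_injective_nat; Function.cantor_injective f hf⟩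

theorem EMetric.exists_seq_pairwise_le_edist_of_not_totallyBounded {X : Type*}
    [PseudoEMetricSpace X] {s : Set X} (hs : ¬ TotallyBounded s) :
    ∃ ε > 0, ∃ x : ℕ → X, (∀ n, x n ∈ s) ∧ Pairwise fun m n => ε ≤ edist (x m) (x n) := by
  simp only [EMetric.totallyBounded_iff, not_forall, not_exists, not_and] at hs
  obtain ⟨ε, hε, hnet⟩ := hs
  have : Std.Symm fun y z : X => ε ≤ edist y z := ⟨fun y z h => by rwa [edist_comm]⟩
  refine ⟨ε, hε, exists_seq_of_forall_finset_exists' (· ∈ s) (fun y z => ε ≤ edist y z)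
    fun t _ => ?_⟩
  obtain ⟨z, hzs, hz⟩ := Set.not_subset.1 (hnet t t.finite_toSet)
  simp only [Set.mem_iUnion, Metric.mem_eball, not_exists, not_lt] at hz
  exact ⟨z, hzs, fun y hy => edist_comm z y ▸ hz y hy⟩

theorem not_exists_countable_dense_of_separated {α ι : Type*} [Uncountable ι]
    (d : α → α → ℝ≥0∞) (P : α → Prop) (F : ι → α) (hF : ∀ i, P (F i)) {r : ℝ≥0∞} (hr : 0 < r)
    (hsep : ∀ i j g, d (F i) g < r → d (F j) g < r → i = j) :
    ¬ ∃ S : Set α, S.Countable ∧ ∀ f, P f → ∀ ε, 0 < ε → ∃ g ∈ S, d f g < ε := by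
  rintro ⟨S, hS, hdense⟩
  choose φ hφS hφ using fun i => hdense (F i) (hF i) r hr
  have : Countable S := hS.to_subtype
  have hinj : Function.Injective fun i => (⟨φ i, hφS i⟩ : S) := fun i j hij => by
    have hφij : φ i = φ j := congrArg Subtype.val hij
    exact hsep i j (φ j) (hφij ▸ hφ i) (hφ j)
  exact not_countable hinj.countable

section Bottleneck

variable {X : Type*} [MetricSpace X] {A : Set X}

theorem bdist_le_iSup_edist (f : ℕ → X) {a : ℕ → X} (ha : ∀ n, a n ∈ A) :
    bdist A f a ≤ ⨆ n, edist (f n) (a n) := by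
  refine iInf₂_le_of_le a ha <| iInf₂_le_of_le a ha <| iInf_le_of_le (Equiv.refl _) ?_
  refine iSup_le fun n => ?_
  rcases n with n | n
  · exact le_iSup (fun n => edist (f n) (a n)) n
  · simp

theorem isDiagram_of_forall_infDist_lt (hA : A.Nonempty) {f : ℕ → X} {D : ℝ}
    (hf : ∀ n, Metric.infDist (f n) A < D) : IsDiagram A f := by
  choose a haA haD using fun n => (Metric.infDist_lt_iff hA).1 (hf n)
  refine ⟨a, haA, ne_top_of_le_ne_top (ENNReal.ofReal_ne_top (r := D)) ?_⟩
  refine (bdist_le_iSup_edist f haA).trans (iSup_le fun n => ?_)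
  rw [edist_dist]
  exact ENNReal.ofReal_le_ofReal (haD n).le

theorem exists_matching_of_bdist_lt {f g : ℕ → X} {r : ℝ≥0∞} (h : bdist A f g < r) :
    ∃ α : ℕ → X, (∀ n, α n ∈ A) ∧ ∃ β : ℕ → X, (∀ n, β n ∈ A) ∧ ∃ e : (ℕ ⊕ ℕ) ≃ (ℕ ⊕ ℕ),
      ∀ n, edist (Sum.elim f α n) (Sum.elim g β (e n)) < r := by
  simp only [bdist, iInf_lt_iff] at h
  obtain ⟨α, hα, β, hβ, e, he⟩ := h
  exact ⟨α, hα, β, hβ, e, fun n => (le_iSup (fun n => edist _ (Sum.elim g β (e n))) n).trans_lt he⟩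

theorem exists_edist_lt_of_bdist_lt_left {f g : ℕ → X} {r : ℝ≥0∞} (h : bdist A f g < r)
    (n : ℕ) : (∃ m, edist (f n) (g m) < r) ∨ ∃ a ∈ A, edist (f n) a < r := by
  obtain ⟨α, -, β, hβ, e, he⟩ := exists_matching_of_bdist_lt h
  have hn := he (.inl n)
  rcases hm : e (.inl n) with m | k <;> rw [hm] at hn
  · exact .inl ⟨m, hn⟩
  · exact .inr ⟨β k, hβ k, hn⟩

theorem exists_edist_lt_of_bdist_lt_right {f g : ℕ → X} {r : ℝ≥0∞} (h : bdist A f g < r)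
    (m : ℕ) : (∃ n, edist (f n) (g m) < r) ∨ ∃ a ∈ A, edist a (g m) < r := by
  obtain ⟨α, hα, β, -, e, he⟩ := exists_matching_of_bdist_lt h
  have hm := he (e.symm (.inl m))
  rw [e.apply_symm_apply] at hm
  rcases hn : e.symm (.inl m) with n | k <;> rw [hn] at hm
  · exact .inl ⟨n, hm⟩
  · exact .inr ⟨α k, hα k, hm⟩

theorem le_bdist_of_forall_le_edist {f f' g : ℕ → X} {r : ℝ≥0∞} {n : ℕ}
    (hfar : ∀ y, (y ∈ A ∨ y ∈ Set.range f') → r + r ≤ edist (f n) y) (h : bdist A f g < r) :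
    r ≤ bdist A f' g := by
  by_contra! h'
  have close : ∀ y, y ∈ A ∨ y ∈ Set.range f' → ∀ m, edist (f n) (g m) < r →
      edist y (g m) < r → False := fun y hy m hm hy' =>
    (hfar y hy).not_gt <| calc
      edist (f n) y ≤ edist (f n) (g m) + edist (g m) y := edist_triangle _ _ _
      _ < r + r := ENNReal.add_lt_add hm (edist_comm y (g m) ▸ hy')
  rcases exists_edist_lt_of_bdist_lt_left h n with ⟨m, hm⟩ | ⟨a, ha, hna⟩
  · rcases exists_edist_lt_of_bdist_lt_right h' m with ⟨k, hk⟩ | ⟨a, ha, hag⟩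
    · exact close _ (.inr ⟨k, rfl⟩) m hm hk
    · exact close a (.inl ha) m hm hag
  · exact (hfar a (.inl ha)).not_gt (hna.trans_le le_add_self)

theorem le_bdist_piecewise {x : ℕ → X} {a₀ : X} (ha₀ : a₀ ∈ A) {c : ℝ≥0∞}
    (hxA : ∀ n, ∀ a ∈ A, c ≤ edist (x n) a) (hx : Pairwise fun m n => c ≤ edist (x m) (x n))
    {T T' : Set ℕ} [∀ n, Decidable (n ∈ T)] [∀ n, Decidable (n ∈ T')] {i : ℕ} (hi : i ∈ T)
    (hi' : i ∉ T') {g : ℕ → X} (h : bdist A (T.piecewise x fun _ => a₀) g < c / 2) :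
    c / 2 ≤ bdist A (T'.piecewise x fun _ => a₀) g := by
  refine le_bdist_of_forall_le_edist (n := i) (fun y hy => ?_) h
  rw [ENNReal.add_halves, Set.piecewise_eq_of_mem _ _ _ hi]
  rcases hy with hy | ⟨k, rfl⟩
  · exact hxA i y hy
  · by_cases hk : k ∈ T'
    · rw [Set.piecewise_eq_of_mem _ _ _ hk]
      exact hx (ne_of_mem_of_not_mem hk hi').symm
    · rw [Set.piecewise_eq_of_notMem _ _ _ hk]
      exact hxA i a₀ ha₀

end Bottleneck

theorem stmt_10_general {X : Type*} [MetricSpace X] (A : Set X) (hA : A.Nonempty)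
    (htb : ∃ D δ : ℝ, 0 < δ ∧ δ < D ∧
      ¬ TotallyBounded {x : X | δ ≤ Metric.infDist x A ∧ Metric.infDist x A < D}) :
    ¬ ∃ S : Set (ℕ → X), S.Countable ∧ (∀ f ∈ S, IsDiagram A f) ∧
      ∀ f : ℕ → X, IsDiagram A f → ∀ ε : ℝ≥0∞, 0 < ε → ∃ g ∈ S, bdist A f g < ε := by
  classical
  obtain ⟨D, δ, hδ, hδD, htb⟩ := htb
  obtain ⟨ε, hε, x, hxs, hxsep⟩ := EMetric.exists_seq_pairwise_le_edist_of_not_totallyBounded htb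
  obtain ⟨a₀, ha₀⟩ := hA
  set c := min ε (ENNReal.ofReal δ)
  have hxA : ∀ n, ∀ a ∈ A, c ≤ edist (x n) a := fun n a ha => min_le_of_right_le <| by
    rw [edist_dist]
    exact ENNReal.ofReal_le_ofReal ((hxs n).1.trans (infDist_le_dist_of_mem ha))
  have hx : Pairwise fun m n => c ≤ edist (x m) (x n) := fun _ _ hmn =>
    min_le_of_left_le (hxsep hmn)
  let F : Set ℕ → ℕ → X := fun T => T.piecewise x fun _ => a₀
  have hF : ∀ T, IsDiagram A (F T) := fun T => isDiagram_of_forall_infDist_lt ⟨a₀, ha₀⟩ fun n => by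
    by_cases hn : n ∈ T
    · simpa [F, hn] using (hxs n).2
    · simpa [F, hn, infDist_zero_of_mem ha₀] using hδ.trans hδD
  rintro ⟨S, hS, -, hdense⟩
  refine not_exists_countable_dense_of_separated (bdist A) (IsDiagram A) F hF
    (ENNReal.half_pos (lt_min hε (ENNReal.ofReal_pos.2 hδ)).ne') (fun T T' g h h' => ?_)
    ⟨S, hS, hdense⟩
  ext i
  exact ⟨fun hi => by_contra fun hi' => (le_bdist_piecewise ha₀ hxA hx hi hi' h).not_gt h',
    fun hi => by_contra fun hi' => (le_bdist_piecewise ha₀ hxA hx hi hi' h').not_gt h⟩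

/-- If for some `D > δ > 0` the set `B_D(A) \ B_δ(A)` is not totally bounded, then
`D_∞(X, A)` is not separable: it has no countable dense subset. -/
theorem stmt_10 {X : Type*} [MetricSpace X] (A : Set X) (hA : A.Nonempty)
    (hAcl : IsClosed A)
    (htb : ∃ D δ : ℝ, 0 < δ ∧ δ < D ∧
      ¬ TotallyBounded {x : X | δ ≤ Metric.infDist x A ∧ Metric.infDist x A < D}) :
    ¬ ∃ S : Set (ℕ → X), S.Countable ∧ (∀ f ∈ S, IsDiagram A f) ∧
      ∀ f : ℕ → X, IsDiagram A f → ∀ ε : ℝ≥0∞, 0 < ε → ∃ g ∈ S, bdist A f g < ε :=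
  stmt_10_general A hA htb
end
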